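/- For every integer n ≥ 1, every r ∈ {1,…,n}, and all real numbers θ and ζ: Σ_{π ∈ S_n, π_1 = r} θ^{ℓ(π)} ζ^{u(π)} = C(n−1, r−1) · (θ)_{r−1} · (ζ)_{n−r}, where the sum is over all permutations of {1,…,n} whose first entry equals r. Equivalently, under the distribution P_n^{(θ,ζ)} (θ,ζ > 0) the first entry π_1 has the Pólya–Eggenberger distribution: P(π_1 = r) = C(n−1, r−1)(θ)_{r−1}(ζ)_{n−r}/(θ+ζ)_{n−1}. -/

import Mathlib

/-!
Deleting the last entry `p` of a permutation of `{1, …, n + 1}` and standardising the rest is a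
bijection `S_{n+1} ≃ {1, …, n + 1} × S_n` that keeps the first `n` entries in relative order, so it
preserves their records; the last entry itself is a proper lower record iff `p = 1` and a proper
upper record iff `p = n + 1`. Summing over `p`, the weighted count `G a b` of permutations of
`{1, …, a + b + 1}` with first entry `a + 1` satisfies the Pascal-type recursion
`G (a + 1) (b + 1) = (θ + a) G a (b + 1) + (ζ + b) G (a + 1) b`, whose solution with `G 0 0 = 1`
is `C(a + b, a) (θ)_a (ζ)_b`.
-/

open Finset

/-- `π j` is a lower record: it is the minimum among the first `j+1` entries. -/
def isLowerRecord {n : ℕ} (π : Equiv.Perm (Fin n)) (j : Fin n) : Prop :=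
  ∀ k, k ≤ j → π j ≤ π k

/-- `π j` is an upper record: it is the maximum among the first `j+1` entries. -/
def isUpperRecord {n : ℕ} (π : Equiv.Perm (Fin n)) (j : Fin n) : Prop :=
  ∀ k, k ≤ j → π k ≤ π j

instance {n : ℕ} (π : Equiv.Perm (Fin n)) (j : Fin n) : Decidable (isLowerRecord π j) :=
  inferInstanceAs (Decidable (∀ k, k ≤ j → π j ≤ π k))

instance {n : ℕ} (π : Equiv.Perm (Fin n)) (j : Fin n) : Decidable (isUpperRecord π j) :=
  inferInstanceAs (Decidable (∀ k, k ≤ j → π k ≤ π j))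

/-- number of proper (position ≥ 2, i.e. index ≥ 1) lower records -/
def properLowerCount {n : ℕ} (π : Equiv.Perm (Fin n)) : ℕ :=
  (univ.filter fun j : Fin n => 0 < j.val ∧ isLowerRecord π j).card

/-- number of proper (position ≥ 2, i.e. index ≥ 1) upper records -/
def properUpperCount {n : ℕ} (π : Equiv.Perm (Fin n)) : ℕ :=
  (univ.filter fun j : Fin n => 0 < j.val ∧ isUpperRecord π j).card

/-- `A n ℓ u` = number of permutations of `{1,…,n}` with exactly `ℓ` proper lower
records and exactly `u` proper upper records. -/
def A (n ℓ u : ℕ) : ℕ :=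
  (univ.filter fun π : Equiv.Perm (Fin n) =>
    properLowerCount π = ℓ ∧ properUpperCount π = u).card

open Equiv

lemma Fin.forall_le_castSucc_iff {n : ℕ} {P : Fin (n + 1) → Prop} (i : Fin n) :
    (∀ k ≤ i.castSucc, P k) ↔ ∀ k ≤ i, P k.castSucc := by
  refine ⟨fun h k hk => h _ (Fin.castSucc_le_castSucc_iff.2 hk), fun h k hk => ?_⟩
  obtain ⟨k, rfl⟩ := Fin.exists_castSucc_eq.2 (Fin.ne_last_of_lt (hk.trans_lt i.castSucc_lt_last))
  exact h k (Fin.castSucc_le_castSucc_iff.1 hk)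

lemma Fin.val_succAbove {n : ℕ} (p : Fin (n + 1)) (i : Fin n) :
    (p.succAbove i : ℕ) = if (i : ℕ) < p then (i : ℕ) else (i : ℕ) + 1 := by
  unfold Fin.succAbove
  split_ifs <;> simp_all [Fin.lt_def]

lemma Fin.val_succAbove_eq_iff {n : ℕ} (p : Fin (n + 1)) (i : Fin n) (k : ℕ) :
    (p.succAbove i : ℕ) = k ↔ (p : ℕ) < k ∧ (i : ℕ) = k - 1 ∨ k < p ∧ (i : ℕ) = k := by
  rw [Fin.val_succAbove]
  split_ifs <;> omega

lemma sum_range_mul_ite_lt_gt {R : Type*} [NonUnitalNonAssocSemiring R] (c : ℕ → R) (lo hi : R)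
    {k N : ℕ} (hk : k ≤ N) :
    ∑ p ∈ range (N + 1), c p * (if p < k then lo else if k < p then hi else 0) =
      (∑ p ∈ range k, c p) * lo + (∑ x ∈ range (N - k), c (k + 1 + x)) * hi := by
  obtain ⟨j, rfl⟩ : ∃ j, N = k + j := ⟨N - k, by omega⟩
  have hj : k + j - k = j := by omega
  rw [add_right_comm, sum_range_add, sum_range_succ, hj, if_neg (lt_irrefl k),
    if_neg (lt_irrefl k), mul_zero, add_zero, sum_mul, sum_mul]
  congr 1
  · exact sum_congr rfl fun p hp => by rw [if_pos (mem_range.1 hp)]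
  · exact sum_congr rfl fun x _ => by rw [if_neg (by omega), if_pos (by omega)]

lemma sum_range_succ_ite_eq_zero {R : Type*} [AddCommMonoidWithOne R] (x : R) (j : ℕ) :
    ∑ q ∈ range (j + 1), (if q = 0 then x else 1) = x + j := by
  rw [sum_range_succ']
  simp [add_comm]

section InsertLast

variable {n : ℕ}

/-- The permutation of `Fin (n + 1)` with last entry `p` whose first `n` entries are those of `e`,
shifted past `p` so that they keep their relative order. -/
def insertLast (p : Fin (n + 1)) (e : Perm (Fin n)) : Perm (Fin (n + 1)) :=
  finSuccEquivLast.trans (e.optionCongr.trans (finSuccEquiv' p).symm)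

@[simp] lemma insertLast_last (p : Fin (n + 1)) (e : Perm (Fin n)) :
    insertLast p e (Fin.last n) = p := by
  simp [insertLast]

@[simp] lemma insertLast_castSucc (p : Fin (n + 1)) (e : Perm (Fin n)) (i : Fin n) :
    insertLast p e i.castSucc = p.succAbove (e i) := by
  simp [insertLast]

lemma insertLast_bijective :
    Function.Bijective fun pe : Fin (n + 1) × Perm (Fin n) => insertLast pe.1 pe.2 := by
  refine (Fintype.bijective_iff_injective_and_card _).2 ⟨?_, ?_⟩
  · rintro ⟨p, e⟩ ⟨q, f⟩ h
    have hp : p = q := by simpa using congrArg (· (Fin.last n)) h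
    subst hp
    have he : e = f := Equiv.ext fun i => by simpa using congrArg (· i.castSucc) h
    rw [he]
  · simp [Fintype.card_perm, Nat.factorial_succ]

lemma isLowerRecord_insertLast_castSucc (p : Fin (n + 1)) (e : Perm (Fin n)) (i : Fin n) :
    isLowerRecord (insertLast p e) i.castSucc ↔ isLowerRecord e i := by
  simp only [isLowerRecord, Fin.forall_le_castSucc_iff, insertLast_castSucc,
    Fin.succAbove_le_succAbove_iff]

lemma isUpperRecord_insertLast_castSucc (p : Fin (n + 1)) (e : Perm (Fin n)) (i : Fin n) :
    isUpperRecord (insertLast p e) i.castSucc ↔ isUpperRecord e i := by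
  simp only [isUpperRecord, Fin.forall_le_castSucc_iff, insertLast_castSucc,
    Fin.succAbove_le_succAbove_iff]

lemma isLowerRecord_last_iff (π : Perm (Fin (n + 1))) :
    isLowerRecord π (Fin.last n) ↔ π (Fin.last n) = 0 := by
  refine ⟨fun h => le_antisymm ?_ (Fin.zero_le _), fun h k _ => by rw [h]; exact Fin.zero_le _⟩
  simpa using h (π.symm 0) (Fin.le_last _)

lemma isUpperRecord_last_iff (π : Perm (Fin (n + 1))) :
    isUpperRecord π (Fin.last n) ↔ π (Fin.last n) = Fin.last n := by
  refine ⟨fun h => le_antisymm (Fin.le_last _) ?_, fun h k _ => by rw [h]; exact Fin.le_last _⟩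
  simpa using h (π.symm (Fin.last n)) (Fin.le_last _)

lemma properLowerCount_insertLast (p : Fin (n + 2)) (e : Perm (Fin (n + 1))) :
    properLowerCount (insertLast p e) = properLowerCount e + if p = 0 then 1 else 0 := by
  simp only [properLowerCount, card_filter, Fin.sum_univ_castSucc, Fin.val_castSucc,
    isLowerRecord_insertLast_castSucc, Fin.val_last, isLowerRecord_last_iff, insertLast_last]
  simp

lemma properUpperCount_insertLast (p : Fin (n + 2)) (e : Perm (Fin (n + 1))) :
    properUpperCount (insertLast p e) = properUpperCount e + if p = Fin.last _ then 1 else 0 := by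
  simp only [properUpperCount, card_filter, Fin.sum_univ_castSucc, Fin.val_castSucc,
    isUpperRecord_insertLast_castSucc, Fin.val_last, isUpperRecord_last_iff, insertLast_last]
  simp

end InsertLast

section FirstEntry

variable {n : ℕ} {R : Type*} [CommSemiring R] (θ ζ : R)

def recordWeight (π : Perm (Fin n)) : R :=
  θ ^ properLowerCount π * ζ ^ properUpperCount π

lemma recordWeight_insertLast (p : Fin (n + 2)) (e : Perm (Fin (n + 1))) :
    recordWeight θ ζ (insertLast p e) =
      (if (p : ℕ) = 0 then θ else 1) * (if (p : ℕ) = n + 1 then ζ else 1) * recordWeight θ ζ e := by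
  rw [recordWeight, recordWeight, properLowerCount_insertLast, properUpperCount_insertLast]
  simp only [Fin.ext_iff, Fin.val_zero, Fin.val_last]
  split_ifs <;> ring

/-- Values are counted from `0`: `k` here is the paper's `π₁ - 1`. -/
def firstEntrySum (m k : ℕ) : R :=
  ∑ π : Perm (Fin (m + 1)) with (π 0 : ℕ) = k, recordWeight θ ζ π

lemma firstEntrySum_zero_zero : firstEntrySum θ ζ 0 0 = 1 := by
  simp [firstEntrySum, recordWeight, properLowerCount, properUpperCount]

lemma sum_recordWeight_succAbove_apply_zero (m k : ℕ) (p : Fin (m + 2)) :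
    ∑ e : Perm (Fin (m + 1)) with (p.succAbove (e 0) : ℕ) = k, recordWeight θ ζ e =
      if (p : ℕ) < k then firstEntrySum θ ζ m (k - 1)
      else if k < p then firstEntrySum θ ζ m k else 0 := by
  simp only [Fin.val_succAbove_eq_iff, firstEntrySum]
  split_ifs
  · congr! 2 with e; omega
  · congr! 2 with e; omega
  · refine sum_eq_zero fun e he => ?_
    simp only [mem_filter] at he
    omega

lemma firstEntrySum_succ_eq_sum (m k : ℕ) :
    firstEntrySum θ ζ (m + 1) k = ∑ p ∈ range (m + 2),
      (if p = 0 then θ else 1) * (if p = m + 1 then ζ else 1) *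
        if p < k then firstEntrySum θ ζ m (k - 1)
        else if k < p then firstEntrySum θ ζ m k else 0 := by
  rw [← Fin.sum_univ_eq_sum_range, firstEntrySum, sum_filter, ← insertLast_bijective.sum_comp,
    Fintype.sum_prod_type]
  refine sum_congr rfl fun p _ => ?_
  rw [← sum_recordWeight_succAbove_apply_zero, sum_filter, mul_sum]
  refine sum_congr rfl fun e _ => ?_
  have hfirst : insertLast p e 0 = p.succAbove (e 0) := insertLast_castSucc p e 0
  rw [hfirst, recordWeight_insertLast, mul_ite_zero]

lemma firstEntrySum_succ (m k : ℕ) (hk : k ≤ m + 1) :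
    firstEntrySum θ ζ (m + 1) k =
      (∑ q ∈ range k, if q = 0 then θ else 1) * firstEntrySum θ ζ m (k - 1) +
        (∑ q ∈ range (m + 1 - k), if q = 0 then ζ else 1) * firstEntrySum θ ζ m k := by
  rw [firstEntrySum_succ_eq_sum, sum_range_mul_ite_lt_gt _ _ _ hk,
    ← sum_range_reflect _ (m + 1 - k)]
  congr 1 <;> congr 1
  · exact sum_congr rfl fun p hp => by
      rw [if_neg (show ¬p = m + 1 by have := mem_range.1 hp; omega), mul_one]
  · exact sum_congr rfl fun x hx => by
      have := mem_range.1 hx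
      rw [if_neg (by omega), one_mul]
      exact if_congr (by omega) rfl rfl

theorem firstEntrySum_eq_choose_mul_prod (a b : ℕ) :
    firstEntrySum θ ζ (a + b) a =
      (a + b).choose a * (∏ j ∈ range a, (θ + j)) * ∏ j ∈ range b, (ζ + j) := by
  match a, b with
  | 0, 0 => simp [firstEntrySum_zero_zero]
  | 0, b + 1 =>
    have ih := firstEntrySum_eq_choose_mul_prod 0 b
    rw [zero_add] at ih ⊢
    rw [firstEntrySum_succ θ ζ b 0 (Nat.zero_le _), Nat.sub_zero, sum_range_succ_ite_eq_zero,
      ih, prod_range_succ, sum_range_zero, Nat.choose_zero_right, Nat.choose_zero_right]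
    ring
  | a + 1, 0 =>
    have ih := firstEntrySum_eq_choose_mul_prod a 0
    rw [add_zero] at ih ⊢
    rw [firstEntrySum_succ θ ζ a (a + 1) le_rfl, Nat.sub_self, Nat.add_sub_cancel,
      sum_range_succ_ite_eq_zero, ih, prod_range_succ, sum_range_zero, Nat.choose_self,
      Nat.choose_self]
    ring
  | a + 1, b + 1 =>
    have ih₁ := firstEntrySum_eq_choose_mul_prod a (b + 1)
    have ih₂ := firstEntrySum_eq_choose_mul_prod (a + 1) b
    rw [← add_assoc] at ih₁
    rw [add_right_comm] at ih₂
    rw [show a + 1 + (b + 1) = a + b + 1 + 1 by ring, firstEntrySum_succ θ ζ _ _ (by omega),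
      show a + b + 1 + 1 - (a + 1) = b + 1 by omega, Nat.add_sub_cancel,
      sum_range_succ_ite_eq_zero, sum_range_succ_ite_eq_zero, ih₁, ih₂,
      Nat.choose_succ_succ' (a + b + 1) a, prod_range_succ, prod_range_succ]
    push_cast
    ring
termination_by a + b

end FirstEntry

/-- `Σ_{π ∈ S_n, π_1 = r} θ^{ℓ(π)} ζ^{u(π)} = C(n−1,r−1) (θ)_{r−1} (ζ)_{n−r}`;
equivalently, under `P_n^{(θ,ζ)}` the first entry has the Pólya–Eggenberger distribution. -/
theorem stmt_10 (n r : ℕ) (hn : 0 < n) (hr1 : 1 ≤ r) (hrn : r ≤ n) (θ ζ : ℝ) :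
    (∑ π ∈ univ.filter (fun π : Equiv.Perm (Fin n) => (π ⟨0, hn⟩).val + 1 = r),
        θ ^ properLowerCount π * ζ ^ properUpperCount π)
      = (Nat.choose (n - 1) (r - 1) : ℝ)
        * (∏ j ∈ Finset.range (r - 1), (θ + (j : ℝ)))
        * (∏ j ∈ Finset.range (n - r), (ζ + (j : ℝ))) := by
  obtain ⟨a, rfl⟩ : ∃ a, r = a + 1 := ⟨r - 1, by omega⟩
  obtain ⟨b, rfl⟩ : ∃ b, n = a + b + 1 := ⟨n - a - 1, by omega⟩
  rw [Nat.add_sub_cancel, Nat.add_sub_cancel, show a + b + 1 - (a + 1) = b by omega,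
    ← firstEntrySum_eq_choose_mul_prod]
  simp only [firstEntrySum, recordWeight, Nat.add_right_cancel_iff, Fin.zero_eta]
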